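/- Let T′ be obtained from a rooted tree T by the star shift operation: v_1 is a vertex of T all of whose (at least two) children are leaves, u is one of these leaf children, and T′ is formed by introducing a new vertex v_2 as a child of v_1, keeping u as a child of v_1, and making all other children of v_1 children of v_2. Suppose there is a nonnegative eigenvector of C(T) for the eigenvalue ρ_C(T) whose entries corresponding to all children of v_1 are strictly positive. Then ρ_C(T′) > ρ_C(T). -/

import Mathlib

/-! Sending each leaf `x` of `T` to `some x` identifies the leaves of `T` and `T′`, and under
this identification no ancestral level decreases: a common ancestor `w` of two leaves stays a
common ancestor in `T′` (a moved child of `v1` is a leaf, hence an ancestor of itself only), and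
levels never drop because collapsing the new vertex `v2` onto `v1` maps every parent step of `T′`
to at most one parent step of `T`. A moved child `z ≠ u` lies one level deeper in `T′`, so `C(T′)`
dominates `C(T)` entrywise with a strict increase at `(z, z)`. Since `f ≥ 0` and `f z > 0`, the
quadratic form of `C(T′)` at `f` exceeds `ρ_C(T) ‖f‖²`, while it is at most the largest eigenvalue
of the symmetric matrix `C(T′)` times `‖f‖²`. -/

open Matrix

/-- A rooted tree on a finite vertex type `V`, encoded by its root and the
parent function: the root is its own parent, and iterating the parent function
from any vertex eventually reaches the root.  (These conditions force the graph
whose edges join each non-root vertex to its parent to be a tree.) -/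
structure TreeOn (V : Type) [Fintype V] [DecidableEq V] where
  root : V
  parent : V → V
  parent_root : parent root = root
  reaches : ∀ v, ∃ k, parent^[k] v = root

namespace TreeOn

variable {V : Type} [Fintype V] [DecidableEq V]

/-- `u` is a (weak) ancestor of `v`: some iterate of the parent function sends
`v` to `u`.  (Any ancestor is reached within `Fintype.card V` steps, so the
bound makes the predicate decidable without changing its meaning.) -/
def IsAncestor (T : TreeOn V) (u v : V) : Prop :=
  ∃ k, k ≤ Fintype.card V ∧ T.parent^[k] v = u

instance (T : TreeOn V) (u v : V) : Decidable (T.IsAncestor u v) := by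
  have h : T.IsAncestor u v ↔ ∃ k ∈ Finset.range (Fintype.card V + 1), T.parent^[k] v = u := by
    simp [IsAncestor, Nat.lt_succ_iff]
  rw [h]; infer_instance

/-- The level of a vertex: its distance to the root. -/
def level (T : TreeOn V) (v : V) : ℕ := Nat.find (T.reaches v)

/-- The ancestral level `ℓ(v ∨ w)`: the level of the lowest common ancestor
of `v` and `w`, i.e. the greatest level of a common ancestor. -/
def lcaLevel (T : TreeOn V) (v w : V) : ℕ :=
  (Finset.univ.filter fun u => T.IsAncestor u v ∧ T.IsAncestor u w).sup T.level

/-- A leaf is a vertex with no children. -/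
def IsLeaf (T : TreeOn V) (v : V) : Prop := ∀ u, T.parent u = v → u = v

instance (T : TreeOn V) : DecidablePred T.IsLeaf := fun v =>
  inferInstanceAs (Decidable (∀ u, T.parent u = v → u = v))

/-- The type of leaves of `T`. -/
abbrev Leaf (T : TreeOn V) := {v : V // T.IsLeaf v}

/-- The ancestral matrix `C(T)`, indexed by the leaves of `T`, whose
`(v, w)` entry is the ancestral level `ℓ(v ∨ w)`. -/
noncomputable def ancMatrix (T : TreeOn V) : Matrix T.Leaf T.Leaf ℝ :=
  Matrix.of fun v w => (T.lcaLevel v.1 w.1 : ℝ)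

/-- The ancestral spectral radius `ρ_C(T)`: the largest eigenvalue of `C(T)`. -/
noncomputable def rhoC (T : TreeOn V) : ℝ :=
  sSup {μ : ℝ | ∃ x : T.Leaf → ℝ, x ≠ 0 ∧ T.ancMatrix.mulVec x = μ • x}

/-- The underlying simple graph of the tree: each non-root vertex is joined
to its parent. -/
def graph (T : TreeOn V) : SimpleGraph V :=
  SimpleGraph.fromRel fun u v => T.parent u = v ∧ u ≠ v

/-- The number of children (outdegree) of a vertex. -/
def childCount (T : TreeOn V) (v : V) : ℕ :=
  (Finset.univ.filter fun u => T.parent u = v ∧ u ≠ v).card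

end TreeOn

namespace Matrix

variable {n : Type*} [Fintype n]

theorem dotProduct_self_pos_of_ne_zero {v : n → ℝ} (hv : v ≠ 0) : 0 < v ⬝ᵥ v :=
  (Fintype.sum_nonneg fun i => mul_self_nonneg (v i)).lt_of_ne' (dotProduct_self_eq_zero.not.2 hv)

theorem dotProduct_mulVec_lt_of_le_of_lt {A B : Matrix n n ℝ} {f : n → ℝ} (hf : 0 ≤ f)
    (hAB : ∀ i j, A i j ≤ B i j) {k : n} (hk : A k k < B k k) (hfk : 0 < f k) :
    f ⬝ᵥ A *ᵥ f < f ⬝ᵥ B *ᵥ f := by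
  have hrow : ∀ i, A i ⬝ᵥ f ≤ B i ⬝ᵥ f := fun i =>
    Finset.sum_le_sum fun j _ => mul_le_mul_of_nonneg_right (hAB i j) (hf j)
  have hrow_k : A k ⬝ᵥ f < B k ⬝ᵥ f :=
    Finset.sum_lt_sum (fun j _ => mul_le_mul_of_nonneg_right (hAB k j) (hf j))
      ⟨k, Finset.mem_univ k, mul_lt_mul_of_pos_right hk hfk⟩
  exact Finset.sum_lt_sum (fun i _ => mul_le_mul_of_nonneg_left (hrow i) (hf i))
    ⟨k, Finset.mem_univ k, mul_lt_mul_of_pos_left hrow_k hfk⟩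

theorem comp_equiv_symm_dotProduct_mulVec {m : Type*} [Fintype m] (B : Matrix m m ℝ) (e : n ≃ m)
    (f : n → ℝ) : f ∘ e.symm ⬝ᵥ B *ᵥ (f ∘ e.symm) = f ⬝ᵥ B.submatrix e e *ᵥ f := by
  rw [submatrix_mulVec_equiv, comp_equiv_symm_dotProduct]

theorem comp_equiv_symm_dotProduct_self {m : Type*} [Fintype m] (e : n ≃ m) (f : n → ℝ) :
    f ∘ e.symm ⬝ᵥ f ∘ e.symm = f ⬝ᵥ f := by
  rw [comp_equiv_symm_dotProduct, Function.comp_assoc, e.symm_comp_self, Function.comp_id]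

namespace IsHermitian

variable [DecidableEq n] {A : Matrix n n ℝ}

theorem dotProduct_mulVec_le_sup'_eigenvalues_mul [Nonempty n] (hA : A.IsHermitian)
    (x : n → ℝ) :
    x ⬝ᵥ A *ᵥ x ≤ Finset.univ.sup' Finset.univ_nonempty hA.eigenvalues * (x ⬝ᵥ x) := by
  set M := Finset.univ.sup' Finset.univ_nonempty hA.eigenvalues
  have hB : (algebraMap ℝ _ M - A).IsHermitian := (isHermitian_diagonal fun _ => M).sub hA
  have hpsd : (algebraMap ℝ _ M - A).PosSemidef := by
    rw [hB.posSemidef_iff_eigenvalues_nonneg]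
    intro i
    have hi := hB.eigenvalues_mem_spectrum_real i
    rw [← spectrum.singleton_sub_eq, hA.spectrum_real_eq_range_eigenvalues] at hi
    obtain ⟨_, rfl, _, ⟨j, rfl⟩, hj⟩ := hi
    rw [← hj, Pi.zero_apply, sub_nonneg]
    exact Finset.le_sup' _ (Finset.mem_univ j)
  simpa [sub_mulVec, Algebra.algebraMap_eq_smul_one, smul_mulVec, dotProduct_sub, sub_nonneg,
    mul_comm] using hpsd.re_dotProduct_nonneg x

theorem lt_sSup_of_mul_dotProduct_lt (hA : A.IsHermitian) {x : n → ℝ} {ρ : ℝ}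
    (hx : ρ * (x ⬝ᵥ x) < x ⬝ᵥ A *ᵥ x) :
    ρ < sSup {μ : ℝ | ∃ v : n → ℝ, v ≠ 0 ∧ A *ᵥ v = μ • v} := by
  have hx0 : x ≠ 0 := by rintro rfl; simp at hx
  have : Nonempty n := (Function.ne_iff.1 hx0).nonempty
  set M := Finset.univ.sup' Finset.univ_nonempty hA.eigenvalues
  have hM_mem : M ∈ {μ : ℝ | ∃ v : n → ℝ, v ≠ 0 ∧ A *ᵥ v = μ • v} := by
    obtain ⟨i, -, hi⟩ := Finset.exists_mem_eq_sup' Finset.univ_nonempty hA.eigenvalues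
    exact ⟨_, (WithLp.ofLp_eq_zero 2).ne.2 (hA.eigenvectorBasis.orthonormal.ne_zero i),
      by rw [show M = hA.eigenvalues i from hi]; exact hA.mulVec_eigenvectorBasis i⟩
  have hM_ub : ∀ μ ∈ {μ : ℝ | ∃ v : n → ℝ, v ≠ 0 ∧ A *ᵥ v = μ • v}, μ ≤ M := by
    rintro μ ⟨v, hv0, hv⟩
    refine le_of_mul_le_mul_right ?_ (dotProduct_self_pos_of_ne_zero hv0)
    simpa [hv, dotProduct_smul] using hA.dotProduct_mulVec_le_sup'_eigenvalues_mul v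
  have hρM : ρ < M := lt_of_mul_lt_mul_right
    (hx.trans_le (hA.dotProduct_mulVec_le_sup'_eigenvalues_mul x))
    (dotProduct_self_pos_of_ne_zero hx0).le
  exact hρM.trans_le (le_csSup ⟨M, hM_ub⟩ hM_mem)

end IsHermitian

end Matrix

namespace TreeOn

variable {V : Type} [Fintype V] [DecidableEq V]

section

variable (T : TreeOn V)

theorem iterate_level (v : V) : T.parent^[T.level v] v = T.root :=
  Nat.find_spec (T.reaches v)

theorem level_le_of_iterate_eq_root {v : V} {k : ℕ} (h : T.parent^[k] v = T.root) :
    T.level v ≤ k :=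
  Nat.find_min' _ h

theorem level_le_level_parent_add_one (v : V) : T.level v ≤ T.level (T.parent v) + 1 :=
  T.level_le_of_iterate_eq_root <| by
    rw [Function.iterate_succ_apply, iterate_level]

theorem level_parent_add_one {v : V} (hv : v ≠ T.root) :
    T.level (T.parent v) + 1 = T.level v := by
  obtain ⟨m, hm⟩ := Nat.exists_eq_succ_of_ne_zero fun h0 : T.level v = 0 =>
    hv (by simpa [h0] using T.iterate_level v)
  have hm' : T.parent^[m] (T.parent v) = T.root := by
    rw [← Function.iterate_succ_apply, ← hm, iterate_level]
  have := T.level_le_of_iterate_eq_root hm'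
  have := T.level_le_level_parent_add_one v
  omega

theorem level_parent_le (v : V) : T.level (T.parent v) ≤ T.level v := by
  by_cases hv : v = T.root
  · rw [hv, T.parent_root]
  · have := T.level_parent_add_one hv
    omega

theorem level_le_of_isAncestor {w v : V} (h : T.IsAncestor w v) : T.level w ≤ T.level v := by
  obtain ⟨k, -, rfl⟩ := h
  induction k with
  | zero => exact le_rfl
  | succ k ih => exact (Function.iterate_succ_apply' T.parent k v ▸ T.level_parent_le _).trans ih

theorem isAncestor_refl (v : V) : T.IsAncestor v v := ⟨0, Nat.zero_le _, rfl⟩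

theorem eq_of_iterate_eq_of_isLeaf {w : V} (hw : T.IsLeaf w) {k : ℕ} {x : V}
    (h : T.parent^[k] x = w) : x = w := by
  induction k generalizing x with
  | zero => exact h
  | succ k ih => exact ih (hw _ (by rwa [Function.iterate_succ_apply'] at h))

theorem lcaLevel_le_iff {v w : V} {n : ℕ} :
    T.lcaLevel v w ≤ n ↔ ∀ x, T.IsAncestor x v → T.IsAncestor x w → T.level x ≤ n := by
  simp [lcaLevel, Finset.sup_le_iff]

theorem level_le_lcaLevel {x v w : V} (hv : T.IsAncestor x v) (hw : T.IsAncestor x w) :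
    T.level x ≤ T.lcaLevel v w :=
  Finset.le_sup (by simp [hv, hw])

theorem lcaLevel_self (v : V) : T.lcaLevel v v = T.level v :=
  le_antisymm (T.lcaLevel_le_iff.2 fun _ h _ => T.level_le_of_isAncestor h)
    (T.level_le_lcaLevel (T.isAncestor_refl v) (T.isAncestor_refl v))

theorem lcaLevel_comm (v w : V) : T.lcaLevel v w = T.lcaLevel w v := by
  simp only [lcaLevel, and_comm]

theorem isHermitian_ancMatrix : T.ancMatrix.IsHermitian :=
  IsHermitian.ext fun v w => by simp [ancMatrix, T.lcaLevel_comm]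

theorem exists_child_ne {v : V} (h : 2 ≤ T.childCount v) (u : V) :
    ∃ z, T.parent z = v ∧ z ≠ u ∧ z ≠ v := by
  obtain ⟨z, hz, hzu⟩ := Finset.exists_mem_ne h u
  rw [Finset.mem_filter] at hz
  exact ⟨z, hz.2.1, hzu, hz.2.2⟩

theorem level_map_le {W : Type} [Fintype W] [DecidableEq W] (S : TreeOn W) (π : W → V)
    (hroot : π S.root = T.root)
    (hstep : ∀ o, π (S.parent o) = π o ∨ π (S.parent o) = T.parent (π o)) (o : W) :
    T.level (π o) ≤ S.level o := by
  induction hn : S.level o generalizing o with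
  | zero =>
    have ho : o = S.root := by simpa [hn] using S.iterate_level o
    exact T.level_le_of_iterate_eq_root (k := 0) (by rw [ho, hroot]; rfl)
  | succ n ih =>
    have ho : o ≠ S.root := by
      rintro rfl
      have := S.level_le_of_iterate_eq_root (v := S.root) (k := 0) rfl
      omega
    have hparent : T.level (π (S.parent o)) ≤ n :=
      ih _ (by have := S.level_parent_add_one ho; omega)
    rcases hstep o with h | h
    · rw [h] at hparent
      omega
    · have := T.level_le_level_parent_add_one (π o)
      rw [h] at hparent
      omega

end

/-- The children of `v1` other than `u`: the vertices that the star shift moves below `v2`. -/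
def StarMoved (T : TreeOn V) (v1 u x : V) : Prop :=
  T.parent x = v1 ∧ x ≠ u ∧ x ≠ v1

theorem not_starMoved_parent {T : TreeOn V} {v1 u : V}
    (hleaf : ∀ x, T.StarMoved v1 u x → T.IsLeaf x) {x : V} (hx : ¬ T.StarMoved v1 u x) :
    ¬ T.StarMoved v1 u (T.parent x) := fun h =>
  hx (by rwa [T.eq_of_iterate_eq_of_isLeaf (hleaf _ h) (k := 1) rfl])

/-- `T'` is the star shift of `T` at `v1` keeping `u`; the new vertex `v2` is `none`. -/
structure IsStarShift (T : TreeOn V) (T' : TreeOn (Option V)) (v1 u : V) : Prop where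
  root_eq : T'.root = some T.root
  parent_none : T'.parent none = some v1
  parent_some : ∀ x : V, T'.parent (some x) =
    if T.parent x = v1 ∧ x ≠ u ∧ x ≠ v1 then none else some (T.parent x)

namespace IsStarShift

variable {T : TreeOn V} {T' : TreeOn (Option V)} {v1 u z : V}

theorem parent_some_of_starMoved (hS : T.IsStarShift T' v1 u) {x : V}
    (hx : T.StarMoved v1 u x) : T'.parent (some x) = none :=
  (hS.parent_some x).trans (if_pos hx)

theorem parent_some_of_not_starMoved (hS : T.IsStarShift T' v1 u) {x : V}
    (hx : ¬ T.StarMoved v1 u x) : T'.parent (some x) = some (T.parent x) :=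
  (hS.parent_some x).trans (if_neg hx)

theorem level_le_level_some (hS : T.IsStarShift T' v1 u) (x : V) :
    T.level x ≤ T'.level (some x) := by
  refine T.level_map_le T' (fun o => o.getD v1) (by simp [hS.root_eq]) (fun o => ?_) (some x)
  rcases o with _ | y
  · simp [hS.parent_none]
  · by_cases hy : T.StarMoved v1 u y
    · simp [hS.parent_some_of_starMoved hy, hy.1]
    · simp [hS.parent_some_of_not_starMoved hy]

theorem level_add_one_le_of_starMoved (hS : T.IsStarShift T' v1 u) (hz : T.StarMoved v1 u z) :
    T.level z + 1 ≤ T'.level (some z) := by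
  have hz_root : z ≠ T.root := fun h => hz.2.2 (by rw [← hz.1, h, T.parent_root])
  have hT := T.level_parent_add_one hz_root
  have hT'z := T'.level_parent_add_one (v := some z) (by simpa [hS.root_eq] using hz_root)
  have hT'v2 := T'.level_parent_add_one (v := none) (by simp [hS.root_eq])
  rw [hz.1] at hT
  rw [hS.parent_some_of_starMoved hz] at hT'z
  rw [hS.parent_none] at hT'v2
  have := hS.level_le_level_some v1
  omega

theorem iterate_some_of_not_starMoved (hS : T.IsStarShift T' v1 u)
    (hleaf : ∀ x, T.StarMoved v1 u x → T.IsLeaf x) {x : V} (hx : ¬ T.StarMoved v1 u x)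
    (k : ℕ) : T'.parent^[k] (some x) = some (T.parent^[k] x) := by
  induction k generalizing x with
  | zero => rfl
  | succ k ih =>
    rw [Function.iterate_succ_apply, Function.iterate_succ_apply,
      hS.parent_some_of_not_starMoved hx, ih (not_starMoved_parent hleaf hx)]

theorem isAncestor_some (hS : T.IsStarShift T' v1 u)
    (hleaf : ∀ x, T.StarMoved v1 u x → T.IsLeaf x) {w x : V} (hw : ¬ T.StarMoved v1 u w)
    (h : T.IsAncestor w x) : T'.IsAncestor (some w) (some x) := by
  obtain ⟨k, hk, rfl⟩ := h
  by_cases hx : T.StarMoved v1 u x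
  · cases k with
    | zero => exact absurd hx hw
    | succ k =>
      refine ⟨k + 2, by rw [Fintype.card_option]; omega, ?_⟩
      show T'.parent^[k] (T'.parent (T'.parent (some x))) = some (T.parent^[k] (T.parent x))
      rw [hS.parent_some_of_starMoved hx, hS.parent_none, hx.1,
        hS.iterate_some_of_not_starMoved hleaf fun h => h.2.2 rfl]
  · exact ⟨k, by rw [Fintype.card_option]; omega, hS.iterate_some_of_not_starMoved hleaf hx k⟩

theorem lcaLevel_le_lcaLevel_some (hS : T.IsStarShift T' v1 u)
    (hleaf : ∀ x, T.StarMoved v1 u x → T.IsLeaf x) (x y : V) :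
    T.lcaLevel x y ≤ T'.lcaLevel (some x) (some y) := by
  refine T.lcaLevel_le_iff.2 fun w hwx hwy => (hS.level_le_level_some w).trans ?_
  by_cases hw : T.StarMoved v1 u w
  · -- a moved vertex is a leaf, so it is an ancestor of itself only
    obtain ⟨k, -, hk⟩ := hwx
    obtain ⟨l, -, hl⟩ := hwy
    rw [T.eq_of_iterate_eq_of_isLeaf (hleaf w hw) hk, T.eq_of_iterate_eq_of_isLeaf (hleaf w hw) hl,
      T'.lcaLevel_self]
  · exact T'.level_le_lcaLevel (hS.isAncestor_some hleaf hw hwx) (hS.isAncestor_some hleaf hw hwy)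

theorem lcaLevel_self_lt_lcaLevel_some (hS : T.IsStarShift T' v1 u) (hz : T.StarMoved v1 u z) :
    T.lcaLevel z z < T'.lcaLevel (some z) (some z) := by
  rw [T.lcaLevel_self, T'.lcaLevel_self]
  exact hS.level_add_one_le_of_starMoved hz

theorem isLeaf_some_iff (hS : T.IsStarShift T' v1 u) (hz : T.StarMoved v1 u z) (x : V) :
    T'.IsLeaf (some x) ↔ T.IsLeaf x := by
  constructor
  · intro hx y hy
    by_cases hy_moved : T.StarMoved v1 u y
    · have := hx none (by rw [hS.parent_none, ← hy, hy_moved.1])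
      simp at this
    · simpa using hx (some y) (by rw [hS.parent_some_of_not_starMoved hy_moved, hy])
  · intro hx o ho
    rcases o with _ | y
    · rw [hS.parent_none, Option.some_inj] at ho
      exact absurd (hx z (by rw [hz.1, ho])) (ho ▸ hz.2.2)
    · by_cases hy_moved : T.StarMoved v1 u y
      · simp [hS.parent_some_of_starMoved hy_moved] at ho
      · rw [hS.parent_some_of_not_starMoved hy_moved, Option.some_inj] at ho
        rw [hx y ho]

theorem not_isLeaf_none (hS : T.IsStarShift T' v1 u) (hz : T.StarMoved v1 u z) :
    ¬ T'.IsLeaf none := fun h => by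
  simpa using h (some z) (hS.parent_some_of_starMoved hz)

def leafEquiv (hS : T.IsStarShift T' v1 u) (hz : T.StarMoved v1 u z) : T.Leaf ≃ T'.Leaf where
  toFun a := ⟨some a.1, (hS.isLeaf_some_iff hz a.1).2 a.2⟩
  invFun b := ⟨b.1.get (Option.isSome_iff_ne_none.2 fun h => hS.not_isLeaf_none hz (h ▸ b.2)),
    (hS.isLeaf_some_iff hz _).1 (by rw [Option.some_get]; exact b.2)⟩
  left_inv _ := rfl
  right_inv b := Subtype.ext (Option.some_get _)

end IsStarShift

end TreeOn

theorem rhoC_lt_rhoC_starShift_general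
    {V : Type} [Fintype V] [DecidableEq V] (T : TreeOn V)
    (T' : TreeOn (Option V)) (v1 u : V)
    (hchild : ∀ x, T.parent x = v1 → x ≠ v1 → T.IsLeaf x)
    (htwo : 2 ≤ T.childCount v1)
    (hroot' : T'.root = some T.root)
    (hparnew : T'.parent none = some v1)
    (hpar' : ∀ x : V, T'.parent (some x) =
      if T.parent x = v1 ∧ x ≠ u ∧ x ≠ v1 then none else some (T.parent x))
    (f : T.Leaf → ℝ) (hfnn : ∀ w, 0 ≤ f w)
    (hfeig : T.ancMatrix.mulVec f = T.rhoC • f)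
    (hfpos : ∀ w : T.Leaf, T.parent w.1 = v1 → w.1 ≠ v1 → 0 < f w) :
    T.rhoC < T'.rhoC := by
  have hS : T.IsStarShift T' v1 u := ⟨hroot', hparnew, hpar'⟩
  obtain ⟨z, hz⟩ := T.exists_child_ne htwo u
  have hleaf : ∀ x, T.StarMoved v1 u x → T.IsLeaf x := fun x hx => hchild x hx.1 hx.2.2
  let e := hS.leafEquiv hz
  let zl : T.Leaf := ⟨z, hleaf z hz⟩
  have hlt : T.rhoC * (f ⬝ᵥ f) < f ⬝ᵥ T'.ancMatrix.submatrix e e *ᵥ f := by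
    rw [← smul_eq_mul, ← dotProduct_smul, ← hfeig]
    refine dotProduct_mulVec_lt_of_le_of_lt hfnn (fun a b => ?_) (k := zl) ?_
      (hfpos zl hz.1 hz.2.2)
    · show (T.lcaLevel a b : ℝ) ≤ T'.lcaLevel (some a) (some b)
      exact_mod_cast hS.lcaLevel_le_lcaLevel_some hleaf a b
    · show (T.lcaLevel z z : ℝ) < T'.lcaLevel (some z) (some z)
      exact_mod_cast hS.lcaLevel_self_lt_lcaLevel_some hz
  rw [← comp_equiv_symm_dotProduct_mulVec, ← comp_equiv_symm_dotProduct_self e] at hlt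
  exact T'.isHermitian_ancMatrix.lt_sSup_of_mul_dotProduct_lt hlt

/-- **star shift operation.** Let `v1` be a vertex of a rooted
tree `T` all of whose (at least two) children are leaves, and let `u` be one
of these leaf children.  The tree `T′` (on the vertex set `Option V`, with the
new vertex `none` playing the role of `v2`) is obtained by introducing the new
vertex `v2` as a child of `v1`, keeping `u` as a child of `v1`, and making all
other children of `v1` children of `v2`.  If there is a nonnegative
eigenvector of `C(T)` for the eigenvalue `ρ_C(T)` whose entries at all
children of `v1` are positive, then `ρ_C(T′) > ρ_C(T)`. -/
theorem rhoC_lt_rhoC_starShift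
    {V : Type} [Fintype V] [DecidableEq V] (T : TreeOn V)
    (T' : TreeOn (Option V)) (v1 u : V)
    (hchild : ∀ x, T.parent x = v1 → x ≠ v1 → T.IsLeaf x)
    (htwo : 2 ≤ T.childCount v1)
    (hu : T.parent u = v1) (hune : u ≠ v1)
    (hroot' : T'.root = some T.root)
    (hparnew : T'.parent none = some v1)
    (hpar' : ∀ x : V, T'.parent (some x) =
      if T.parent x = v1 ∧ x ≠ u ∧ x ≠ v1 then none else some (T.parent x))
    (f : T.Leaf → ℝ) (hf0 : f ≠ 0) (hfnn : ∀ w, 0 ≤ f w)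
    (hfeig : T.ancMatrix.mulVec f = T.rhoC • f)
    (hfpos : ∀ w : T.Leaf, T.parent w.1 = v1 → w.1 ≠ v1 → 0 < f w) :
    T.rhoC < T'.rhoC :=
  rhoC_lt_rhoC_starShift_general T T' v1 u hchild htwo hroot' hparnew hpar' f hfnn hfeig hfpos
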